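/- Every free measure on ℕ which is both a P-measure and an almost Q-measure is a Q-measure. -/

import Mathlib

open Filter

/-- A finitely additive probability measure defined on all subsets of `ℕ`. -/
def IsMeasure (μ : Set ℕ → ℝ) : Prop :=
  (∀ A : Set ℕ, 0 ≤ μ A ∧ μ A ≤ 1) ∧ μ Set.univ = 1 ∧
    ∀ A B : Set ℕ, Disjoint A B → μ (A ∪ B) = μ A + μ B

/-- A measure is free if it vanishes on finite sets. -/
def IsFree (μ : Set ℕ → ℝ) : Prop := ∀ A : Set ℕ, A.Finite → μ A = 0

/-- A function is finite-to-one if all fibers are finite. -/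
def FinToOne (f : ℕ → ℕ) : Prop := ∀ n : ℕ, (f ⁻¹' {n}).Finite

/-- Rudin-Blass reducibility: `ν ≤_RB μ` via a finite-to-one map. -/
def RBLe (ν μ : Set ℕ → ℝ) : Prop :=
  ∃ f : ℕ → ℕ, FinToOne f ∧ ∀ A : Set ℕ, μ (f ⁻¹' A) = ν A

/-- Rudin-Keisler reducibility: `ν ≤_RK μ`. -/
def RKLe (ν μ : Set ℕ → ℝ) : Prop :=
  ∃ f : ℕ → ℕ, ∀ A : Set ℕ, μ (f ⁻¹' A) = ν A

/-- A measure is shift invariant if `μ(A + 1) = μ(A)`. -/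
def ShiftInvariant (μ : Set ℕ → ℝ) : Prop :=
  ∀ A : Set ℕ, μ ((fun n => n + 1) '' A) = μ A

/-- A measure extends the asymptotic density. -/
def ExtendsDensity (μ : Set ℕ → ℝ) : Prop :=
  ∀ (A : Set ℕ) (d : ℝ),
    Tendsto (fun n : ℕ => ((A ∩ Set.Iio n).ncard : ℝ) / n) atTop (nhds d) → μ A = d

/-- A partition of `ℕ` indexed by `ℕ`. -/
def IsPartition (A : ℕ → Set ℕ) : Prop :=
  Pairwise (Function.onFun Disjoint A) ∧ (⋃ n, A n) = Set.univ

/-- A selector of a partition: meets each piece in at most one point. -/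
def IsSelector (S : Set ℕ) (A : ℕ → Set ℕ) : Prop :=
  ∀ n : ℕ, (S ∩ A n).Subsingleton

/-- A Q-measure: each partition into finite sets has a selector of full measure. -/
def IsQMeasure (μ : Set ℕ → ℝ) : Prop :=
  ∀ A : ℕ → Set ℕ, IsPartition A → (∀ n, (A n).Finite) →
    ∃ S : Set ℕ, IsSelector S A ∧ μ S = 1

/-- A Q⁺-measure: each partition into finite sets has a selector of positive measure. -/
def IsQPlusMeasure (μ : Set ℕ → ℝ) : Prop :=
  ∀ A : ℕ → Set ℕ, IsPartition A → (∀ n, (A n).Finite) →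
    ∃ S : Set ℕ, IsSelector S A ∧ 0 < μ S

/-- A P-measure: each partition has a pseudo-selector of the largest possible measure. -/
def IsPMeasure (μ : Set ℕ → ℝ) : Prop :=
  ∀ A : ℕ → Set ℕ, IsPartition A →
    ∃ S : Set ℕ, (∀ n, (S ∩ A n).Finite) ∧ μ S = 1 - ∑' n, μ (A n)

/-- A selective measure: each partition has a selector of the largest possible measure. -/
def IsSelectiveMeasure (μ : Set ℕ → ℝ) : Prop :=
  ∀ A : ℕ → Set ℕ, IsPartition A →
    ∃ S : Set ℕ, IsSelector S A ∧ μ S = 1 - ∑' n, μ (A n)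

/-- A non-atomic measure: finite partitions into pieces of arbitrarily small measure. -/
def NonAtomic (μ : Set ℕ → ℝ) : Prop :=
  ∀ ε : ℝ, 0 < ε → ∃ (N : ℕ) (P : Fin N → Set ℕ),
    Pairwise (Function.onFun Disjoint P) ∧ (⋃ i, P i) = Set.univ ∧ ∀ i, μ (P i) < ε

/-- The continuum hypothesis: `2 ^ ℵ₀ = ℵ₁`. -/
def CH : Prop := (2 : Cardinal.{0}) ^ Cardinal.aleph0.{0} = Cardinal.aleph.{0} 1


/-- An almost Q-measure: every partition into finite sets admits selectors of measure
arbitrarily close to 1. -/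
def IsAlmostQMeasure (μ : Set ℕ → ℝ) : Prop :=
  ∀ A : ℕ → Set ℕ, IsPartition A → (∀ n, (A n).Finite) →
    ∀ δ : ℝ, δ < 1 → ∃ S : Set ℕ, IsSelector S A ∧ δ < μ S

/-! Pick selectors `T j` with `μ (T j)ᶜ ≤ 2⁻ʲ`. The P-property makes `μ` σ-subadditive up to
finite sets: there is `U j` with `μ (U j) ≤ 2¹⁻ʲ` containing each `(T i)ᶜ`, `i ≥ j`, up to a
finite set, so `(U j)ᶜ` is almost contained in every `T i`, `i ≥ j`. In each piece keep only the
point that enters the sets `(U 0)ᶜ, (U 1)ᶜ, …` first: as the pieces are finite, the resulting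
selector misses only finitely many points of each `(U j)ᶜ`, so it has measure `1`. -/

open Set Function

namespace IsMeasure

variable {μ : Set ℕ → ℝ}

theorem nonneg (hμ : IsMeasure μ) (A : Set ℕ) : 0 ≤ μ A := (hμ.1 A).1

theorem le_one (hμ : IsMeasure μ) (A : Set ℕ) : μ A ≤ 1 := (hμ.1 A).2

theorem union (hμ : IsMeasure μ) {A B : Set ℕ} (h : Disjoint A B) :
    μ (A ∪ B) = μ A + μ B :=
  hμ.2.2 A B h

theorem empty (hμ : IsMeasure μ) : μ ∅ = 0 := by
  simpa using hμ.union (disjoint_empty ∅)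

theorem inter_add_diff (hμ : IsMeasure μ) (A B : Set ℕ) : μ (A ∩ B) + μ (A \ B) = μ A := by
  rw [← hμ.union disjoint_sdiff_inter.symm, inter_union_sdiff]

theorem compl (hμ : IsMeasure μ) (A : Set ℕ) : μ Aᶜ = 1 - μ A := by
  rw [← hμ.2.1, ← hμ.inter_add_diff univ A, univ_inter, ← compl_eq_univ_sdiff]
  ring

theorem mono (hμ : IsMeasure μ) {A B : Set ℕ} (h : A ⊆ B) : μ A ≤ μ B := by
  rw [← hμ.inter_add_diff B A, inter_eq_right.mpr h]
  linarith [hμ.nonneg (B \ A)]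

theorem le_of_diff_finite (hμ : IsMeasure μ) (hfree : IsFree μ) {A B : Set ℕ}
    (h : (A \ B).Finite) : μ A ≤ μ B := by
  rw [← hμ.inter_add_diff A B, hfree _ h, add_zero]
  exact hμ.mono inter_subset_right

theorem measure_biUnion_range (hμ : IsMeasure μ) {C : ℕ → Set ℕ}
    (hC : Pairwise (Disjoint on C)) (n : ℕ) :
    μ (⋃ i ∈ Finset.range n, C i) = ∑ i ∈ Finset.range n, μ (C i) := by
  induction n with
  | zero => simp [hμ.empty]
  | succ n ih =>
    rw [Finset.sum_range_succ, ← ih, Finset.range_add_one, Finset.set_biUnion_insert,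
      union_comm, hμ.union]
    exact disjoint_iUnion₂_left.mpr fun i hi => hC (Finset.mem_range.mp hi).ne

theorem summable_of_pairwise_disjoint (hμ : IsMeasure μ) {C : ℕ → Set ℕ}
    (hC : Pairwise (Disjoint on C)) : Summable fun n => μ (C n) :=
  summable_of_sum_range_le (c := 1) (fun _ => hμ.nonneg _) fun n =>
    hμ.measure_biUnion_range hC n ▸ hμ.le_one _

end IsMeasure

namespace IsPMeasure

variable {μ : Set ℕ → ℝ}

theorem exists_pseudoUnion_of_pairwise_disjoint (hP : IsPMeasure μ) (hμ : IsMeasure μ)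
    (hfree : IsFree μ) {Y : ℕ → Set ℕ} (hY : Pairwise (Disjoint on Y)) :
    ∃ U, (∀ k, (Y k \ U).Finite) ∧ μ U = ∑' k, μ (Y k) := by
  set Z := (⋃ k, Y k)ᶜ
  let C : ℕ → Set ℕ := fun n => Nat.casesOn n Z Y
  have hC : IsPartition C := by
    refine ⟨fun i j hij => ?_, ?_⟩
    · rcases i with _ | i <;> rcases j with _ | j
      · exact absurd rfl hij
      · exact disjoint_compl_left.mono_right (subset_iUnion Y j)
      · exact disjoint_compl_left.mono_right (subset_iUnion Y i) |>.symm
      · exact hY (by omega)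
    · refine eq_univ_of_forall fun x => ?_
      by_cases hx : x ∈ ⋃ k, Y k
      · obtain ⟨k, hk⟩ := mem_iUnion.mp hx
        exact mem_iUnion.mpr ⟨k + 1, hk⟩
      · exact mem_iUnion.mpr ⟨0, hx⟩
  obtain ⟨S, hSfin, hSμ⟩ := hP C hC
  refine ⟨Sᶜ \ Z, fun k => (hSfin (k + 1)).subset ?_, ?_⟩
  · rintro x ⟨hxY, hxU⟩
    have hxZ : x ∉ Z := not_not.mpr (mem_iUnion.mpr ⟨k, hxY⟩)
    exact ⟨by_contra fun hxS => hxU ⟨hxS, hxZ⟩, hxY⟩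
  · have hsum : ∑' n, μ (C n) = μ Z + ∑' k, μ (Y k) :=
      (hμ.summable_of_pairwise_disjoint hC.1).tsum_eq_zero_add
    have hSZ : μ (Z ∩ S) = 0 := hfree _ (inter_comm S Z ▸ hSfin 0)
    have hZ := hμ.inter_add_diff Z S
    have hSc := hμ.inter_add_diff Sᶜ Z
    rw [sdiff_eq, inter_comm Z Sᶜ] at hZ
    rw [hμ.compl, hSμ] at hSc
    linarith

theorem exists_pseudoUnion_le_tsum (hP : IsPMeasure μ) (hμ : IsMeasure μ) (hfree : IsFree μ)
    {Y : ℕ → Set ℕ} (hY : Summable fun k => μ (Y k)) :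
    ∃ U, (∀ k, (Y k \ U).Finite) ∧ μ U ≤ ∑' k, μ (Y k) := by
  obtain ⟨U, hUfin, hUμ⟩ := hP.exists_pseudoUnion_of_pairwise_disjoint hμ hfree
    (disjoint_disjointed Y)
  refine ⟨U, fun k => ?_, hUμ ▸ ?_⟩
  · refine ((Finset.Iic k).finite_toSet.biUnion fun i _ => hUfin i).subset ?_
    rintro x ⟨hxY, hxU⟩
    have hx : x ∈ ⋃ i ∈ Finset.Iic k, disjointed Y i :=
      biUnion_Iic_disjointed Y k ▸ le_partialSups Y k hxY
    obtain ⟨i, hi, hxi⟩ := mem_iUnion₂.mp hx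
    exact mem_iUnion₂.mpr ⟨i, hi, hxi, hxU⟩
  · have hle (k : ℕ) : μ (disjointed Y k) ≤ μ (Y k) := hμ.mono (disjointed_le Y k)
    exact (hY.of_nonneg_of_le (fun _ => hμ.nonneg _) hle).tsum_le_tsum hle hY

end IsPMeasure

/-- Keep a point iff it enters `S` strictly before every other point of its fibre. Since
`S 0 ∪ … ∪ S i` lies in `T i` up to a finite set, only finitely many fibres hold two points that
enter by stage `i`. -/
theorem exists_injOn_diff_finite {α β : Type*} {p : α → β} (hp : ∀ b, (p ⁻¹' {b}).Finite)
    {S T : ℕ → Set α} (hT : ∀ i, InjOn p (T i)) (hST : ∀ j i, j ≤ i → (S j \ T i).Finite) :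
    ∃ W, InjOn p W ∧ ∀ i, (S i \ W).Finite := by
  let rank : α → ℕ := fun y => sInf {j | y ∈ S j}
  have mem_rank {y : α} {j : ℕ} (hy : y ∈ S j) : y ∈ S (rank y) :=
    Nat.sInf_mem (s := {j | y ∈ S j}) ⟨j, hy⟩
  have rank_le {y : α} {j : ℕ} (hy : y ∈ S j) : rank y ≤ j := Nat.sInf_le hy
  refine ⟨{y ∈ ⋃ j, S j | ∀ z ∈ ⋃ j, S j, p z = p y → z ≠ y → rank y < rank z}, ?_,
    fun i => ?_⟩
  · intro y ⟨hyS, hy⟩ y' ⟨hy'S, hy'⟩ hpy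
    by_contra hne
    exact lt_asymm (hy y' hy'S hpy.symm (Ne.symm hne)) (hy' y hyS hpy hne)
  · let F := ⋃ j ∈ Finset.range (i + 1), S j \ T i
    have hF : F.Finite := (Finset.range (i + 1)).finite_toSet.biUnion fun j hj =>
      hST j i (Nat.lt_succ_iff.mp (Finset.mem_range.mp hj))
    have mem_T {x : α} (hx : x ∈ ⋃ j, S j) (hxi : rank x ≤ i) (hxF : x ∉ F) : x ∈ T i := by
      obtain ⟨j, hxj⟩ := mem_iUnion.mp hx
      by_contra hxT
      exact hxF (mem_biUnion (Finset.mem_range.mpr (Nat.lt_succ_of_le hxi)) ⟨mem_rank hxj, hxT⟩)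
    refine (hF.image p).preimage' (fun b _ => hp b) |>.subset ?_
    rintro y ⟨hyi, hyW⟩
    have hyS : y ∈ ⋃ j, S j := mem_iUnion.mpr ⟨i, hyi⟩
    simp only [mem_sep_iff, hyS, true_and, not_forall, not_lt] at hyW
    obtain ⟨z, hzS, hpz, hzy, hrank⟩ := hyW
    by_cases hyF : y ∈ F
    · exact ⟨y, hyF, rfl⟩
    by_cases hzF : z ∈ F
    · exact ⟨z, hzF, hpz⟩
    have hyT := mem_T hyS (rank_le hyi) hyF
    exact absurd (hT i (mem_T hzS (hrank.trans (rank_le hyi)) hzF) hyT hpz) hzy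

theorem IsPMeasure.exists_injOn_measure_eq_one {μ : Set ℕ → ℝ} (hP : IsPMeasure μ)
    (hμ : IsMeasure μ) (hfree : IsFree μ) {p : ℕ → ℕ} (hp : ∀ n, (p ⁻¹' {n}).Finite)
    (hT : ∀ δ < 1, ∃ T, InjOn p T ∧ δ < μ T) : ∃ W, InjOn p W ∧ μ W = 1 := by
  have hTc (j : ℕ) : ∃ T, InjOn p T ∧ μ Tᶜ ≤ (1 / 2) ^ j := by
    obtain ⟨T, hTinj, hTμ⟩ := hT (1 - (1 / 2) ^ j) (sub_lt_self _ (by positivity))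
    exact ⟨T, hTinj, by linarith [hμ.compl T]⟩
  choose T hTinj hTc using hTc
  have hU (j : ℕ) : ∃ U, (∀ k, ((T (j + k))ᶜ \ U).Finite) ∧ μ U ≤ 2 * (1 / 2) ^ j := by
    have hgeom : HasSum (fun k => ((1 : ℝ) / 2) ^ (j + k)) ((1 / 2) ^ j * 2) := by
      simpa only [pow_add] using hasSum_geometric_two.mul_left ((1 / 2) ^ j)
    have hsum : Summable fun k => μ (T (j + k))ᶜ :=
      hgeom.summable.of_nonneg_of_le (fun _ => hμ.nonneg _) fun _ => hTc _
    obtain ⟨U, hUfin, hUμ⟩ := hP.exists_pseudoUnion_le_tsum hμ hfree hsum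
    refine ⟨U, hUfin, hUμ.trans ?_⟩
    rw [mul_comm, ← hgeom.tsum_eq]
    exact hsum.tsum_le_tsum (fun _ => hTc _) hgeom.summable
  choose U hUfin hUμ using hU
  obtain ⟨W, hWinj, hWfin⟩ := exists_injOn_diff_finite hp hTinj (S := fun j => (U j)ᶜ)
    fun j i hji => (hUfin j (i - j)).subset fun x ⟨hxU, hxT⟩ =>
      ⟨by rwa [Nat.add_sub_cancel' hji], hxU⟩
  have hlim : Tendsto (fun j : ℕ => 1 - 2 * ((1 : ℝ) / 2) ^ j) atTop (nhds 1) := by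
    simpa using ((tendsto_pow_atTop_nhds_zero_of_lt_one (one_half_pos (α := ℝ)).le
      one_half_lt_one).const_mul 2).const_sub 1
  refine ⟨W, hWinj, le_antisymm (hμ.le_one W) (le_of_tendsto' hlim fun j => ?_)⟩
  calc 1 - 2 * (1 / 2) ^ j ≤ 1 - μ (U j) := by linarith [hUμ j]
    _ = μ (U j)ᶜ := (hμ.compl _).symm
    _ ≤ μ W := hμ.le_of_diff_finite hfree (hWfin j)

namespace IsPartition

variable {A : ℕ → Set ℕ} {p : ℕ → ℕ}

theorem preimage_singleton (hA : IsPartition A) (hp : ∀ x, x ∈ A (p x)) (n : ℕ) :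
    p ⁻¹' {n} = A n := by
  ext x
  refine ⟨fun hx => (mem_singleton_iff.mp hx) ▸ hp x, fun hx => ?_⟩
  by_contra hne
  exact disjoint_left.mp (hA.1 hne) (hp x) hx

theorem isSelector_iff_injOn (hA : IsPartition A) (hp : ∀ x, x ∈ A (p x)) {S : Set ℕ} :
    IsSelector S A ↔ InjOn p S := by
  simp only [IsSelector, ← hA.preimage_singleton hp]
  refine ⟨fun h x hx y hy hxy => h (p x) ⟨hx, rfl⟩ ⟨hy, hxy.symm⟩, fun h n x hx y hy => ?_⟩
  exact h hx.1 hy.1 (hx.2.trans hy.2.symm)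

end IsPartition

/-- Every P-measure which is an almost Q-measure is a Q-measure. -/
theorem stmt_17 (μ : Set ℕ → ℝ) (hμ : IsMeasure μ) (hfree : IsFree μ)
    (hP : IsPMeasure μ) (hAQ : IsAlmostQMeasure μ) : IsQMeasure μ := by
  intro A hA hfin
  choose p hp using fun x => mem_iUnion.mp (eq_univ_iff_forall.mp hA.2 x)
  have hsel {S : Set ℕ} : IsSelector S A ↔ InjOn p S := hA.isSelector_iff_injOn hp
  obtain ⟨W, hWinj, hWμ⟩ := hP.exists_injOn_measure_eq_one hμ hfree
    (fun n => hA.preimage_singleton hp n ▸ hfin n) fun δ hδ => by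
      obtain ⟨T, hT, hTμ⟩ := hAQ A hA hfin δ hδ
      exact ⟨T, hsel.mp hT, hTμ⟩
  exact ⟨W, hsel.mpr hWinj, hWμ⟩
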